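/- arXiv:2512.08432 — 2 statements merged into one kernel-verified Lean document; each statement's English description precedes it below -/
import Mathlib

section
/- Let H be an N×N complex Hermitian matrix with H² = H, let |ψ0⟩ ∈ ℂ^N be a unit vector, ψ0 = |ψ0⟩⟨ψ0|, X0 := [H, ψ0], Y0 := i[H, X0]. Fix x, y ∈ ℝ, and let A, R ∈ ℝ satisfy R ≥ 0, x = R cos A, y = R sin A. Set a1 := A + π/2, a2 := A − π/2, b1 := −R/2, b2 := R/2. Then for every unitary U, the curve γ(t) := e^{i a1 H} e^{i t b1 ψ0} e^{−iπH} e^{i t b2 ψ0} e^{−i a2 H} U (t ≥ 0) satisfies γ(0) = U, and γ is differentiable at t = 0 with γ′(0) = (x X0 + y Y0) U. (This is the 5-factor Grover-compatible retraction.) -/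
open Matrix

attribute [local instance] Matrix.frobeniusNormedAddCommGroup Matrix.frobeniusNormedSpace

/-- The rank-one projector `|ψ⟩⟨ψ|` associated with a vector `ψ`. -/
noncomputable def rankOneProj {N : ℕ} (ψ : Fin N → ℂ) : Matrix (Fin N) (Fin N) ℂ :=
  Matrix.vecMulVec ψ (star ψ)

/-- The gate `e^{iθM}` for a matrix `M` and a real angle `θ`. -/
noncomputable def expGate {N : ℕ} (M : Matrix (Fin N) (Fin N) ℂ) (θ : ℝ) :
    Matrix (Fin N) (Fin N) ℂ :=
  NormedSpace.exp ((Complex.I * (θ : ℂ)) • M)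

/-!
Since `H` is a projector, every gate `e^{iθH}` equals `1 + (e^{iθ} - 1) H`; in particular
`e^{-iπH} = 1 - 2H` is a reflection, and the `H`-angles `a₁ - π - a₂` add up to `0`, so `γ 0 = U`.
At `t = 0` only the two `ψ₀`-gates move, and because `b₁ = -b₂` their contributions combine through
the reflection into `-iR e^{ia₁H} X₀ e^{-ia₂H}`. As `H X₀ H = 0`, conjugating `X₀` by `H`-gates only
multiplies its two pieces `H X₀` and `X₀ H` by the phases `e^{ia₁} = i e^{iA}` and
`e^{-ia₂} = i e^{-iA}`, which turns the velocity into `R e^{iA} H X₀ + R e^{-iA} X₀ H = x X₀ + y Y₀`.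
-/

attribute [local instance] Matrix.frobeniusNormedRing Matrix.frobeniusNormedAlgebra

open NormedSpace Complex

theorem IsIdempotentElem.exp_smul {𝔸 : Type*} [NormedRing 𝔸] [NormedAlgebra ℂ 𝔸]
    [CompleteSpace 𝔸] {p : 𝔸} (hp : IsIdempotentElem p) (c : ℂ) :
    exp (c • p) = 1 + (Complex.exp c - 1) • p := by
  have hterm : ∀ n : ℕ, ((n.factorial : ℂ)⁻¹) • (c • p) ^ n
      = ((n.factorial : ℂ)⁻¹ * c ^ n) • p + if n = 0 then 1 - p else 0 := by
    rintro (_ | n)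
    · simp
    · simp [smul_pow, hp.pow_succ_eq, smul_smul]
  have hscalar : HasSum (fun n : ℕ => (n.factorial : ℂ)⁻¹ * c ^ n) (Complex.exp c) := by
    simpa [Complex.exp_eq_exp_ℂ, smul_eq_mul] using exp_series_hasSum_exp' (𝕂 := ℂ) c
  have hsum := (hscalar.smul_const p).add (hasSum_ite_eq 0 (1 - p))
  refine (exp_series_hasSum_exp' (𝕂 := ℂ) (c • p)).unique ?_
  convert hsum using 1
  · exact funext hterm
  · rw [sub_smul, one_smul]; abel

variable {N : ℕ}

theorem expGate_of_isIdempotentElem {M : Matrix (Fin N) (Fin N) ℂ} (hM : IsIdempotentElem M)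
    (θ : ℝ) : expGate M θ = 1 + (Complex.exp (I * θ) - 1) • M :=
  hM.exp_smul _

theorem expGate_zero (M : Matrix (Fin N) (Fin N) ℂ) : expGate M 0 = 1 := by
  simp [expGate]

theorem expGate_mul_expGate (M : Matrix (Fin N) (Fin N) ℂ) (θ₁ θ₂ : ℝ) :
    expGate M θ₁ * expGate M θ₂ = expGate M (θ₁ + θ₂) := by
  rw [expGate, expGate, expGate, ← Matrix.exp_add_of_commute _ _
    (((Commute.refl M).smul_left (I * θ₁)).smul_right (I * θ₂)), ← add_smul, ofReal_add, mul_add]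

theorem hasDerivAt_expGate_mul_const (M : Matrix (Fin N) (Fin N) ℂ) (b t : ℝ) :
    HasDerivAt (fun s : ℝ => expGate M (s * b)) (expGate M (t * b) * (I * b) • M) t := by
  have hfun : ∀ s : ℝ, expGate M (s * b) = exp (s • (I * b) • M) := fun s => by
    rw [expGate, ← Complex.coe_smul, smul_smul]; push_cast; ring_nf
  simp only [hfun]
  exact hasDerivAt_exp_smul_const (𝕂 := ℝ) ((I * b) • M) t

theorem IsIdempotentElem.conj_commutator {R S : Type*} [CommRing S] [Ring R] [Algebra S R] {h : R}
    (hh : IsIdempotentElem h) (p : R) (u v : S) :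
    (1 + (u - 1) • h) * (h * p - p * h) * (1 + (v - 1) • h)
      = u • (h * (h * p - p * h)) + v • ((h * p - p * h) * h) := by
  have hh' : ∀ x : R, h * (h * x) = h * x := fun x => by rw [← mul_assoc, hh.eq]
  simp only [add_mul, mul_add, sub_mul, mul_sub, smul_mul_assoc, mul_smul_comm, one_mul, mul_one,
    mul_assoc, hh', hh.eq]
  module

theorem IsIdempotentElem.commutator_eq {R : Type*} [Ring R] {h : R} (hh : IsIdempotentElem h)
    (p : R) : h * p - p * h = h * (h * p - p * h) + (h * p - p * h) * h := by
  have hh' : ∀ x : R, h * (h * x) = h * x := fun x => by rw [← mul_assoc, hh.eq]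
  simp only [mul_sub, sub_mul, mul_assoc, hh', hh.eq]
  abel

theorem expGate_neg_pi {M : Matrix (Fin N) (Fin N) ℂ} (hM : IsIdempotentElem M) :
    expGate M (-Real.pi) = 1 - (2 : ℂ) • M := by
  rw [expGate_of_isIdempotentElem hM, ofReal_neg, mul_neg, mul_comm, Complex.exp_neg,
    exp_pi_mul_I]
  norm_num [sub_eq_add_neg]

theorem grover_retraction_velocity {H : Matrix (Fin N) (Fin N) ℂ} (hH : IsIdempotentElem H)
    (P : Matrix (Fin N) (Fin N) ℂ) (A R : ℝ) :
    (expGate H (A + Real.pi / 2) * (I * ↑(-R / 2)) • P * expGate H (-Real.pi)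
        + expGate H (A + Real.pi / 2) * expGate H (-Real.pi) * (I * ↑(R / 2)) • P)
        * expGate H (-(A - Real.pi / 2))
      = ((R * Real.cos A : ℝ) : ℂ) • (H * P - P * H)
        + ((R * Real.sin A : ℝ) : ℂ) • (I • (H * (H * P - P * H) - (H * P - P * H) * H)) := by
  have hreflect : ∀ E F : Matrix (Fin N) (Fin N) ℂ,
      (E * (I * ↑(-R / 2)) • P * (1 - (2 : ℂ) • H) + E * (1 - (2 : ℂ) • H) * (I * ↑(R / 2)) • P) * F
        = (-(I * R)) • (E * (H * P - P * H) * F) := by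
    intro E F
    simp only [mul_sub, sub_mul, add_mul, smul_mul_assoc, mul_smul_comm, mul_one, mul_assoc]
    push_cast
    module
  have hphase₁ : -(I * R) * Complex.exp (I * ↑(A + Real.pi / 2))
      = ((R * Real.cos A : ℝ) : ℂ) + I * ((R * Real.sin A : ℝ) : ℂ) := by
    rw [mul_comm I ((A + Real.pi / 2 : ℝ) : ℂ), Complex.exp_mul_I]
    push_cast
    rw [Complex.cos_add_pi_div_two, Complex.sin_add_pi_div_two]
    linear_combination (-R * Complex.cos A : ℂ) * I_sq
  have hphase₂ : -(I * R) * Complex.exp (I * ↑(-(A - Real.pi / 2)))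
      = ((R * Real.cos A : ℝ) : ℂ) - I * ((R * Real.sin A : ℝ) : ℂ) := by
    rw [mul_comm I ((-(A - Real.pi / 2) : ℝ) : ℂ), Complex.exp_mul_I]
    push_cast
    rw [neg_sub, Complex.cos_pi_div_two_sub, Complex.sin_pi_div_two_sub]
    linear_combination (-R * Complex.cos A : ℂ) * I_sq
  rw [expGate_neg_pi hH, hreflect, expGate_of_isIdempotentElem hH,
    expGate_of_isIdempotentElem hH, hH.conj_commutator, smul_add, smul_smul, smul_smul, hphase₁,
    hphase₂]
  linear_combination (norm := module) (-((R * Real.cos A : ℝ) : ℂ)) • hH.commutator_eq P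

theorem stmt_8_general {N : ℕ} (H : Matrix (Fin N) (Fin N) ℂ)
    (hProj : H * H = H)
    (ψ₀ : Fin N → ℂ)
    (X₀ Y₀ : Matrix (Fin N) (Fin N) ℂ)
    (hX₀ : X₀ = H * rankOneProj ψ₀ - rankOneProj ψ₀ * H)
    (hY₀ : Y₀ = Complex.I • (H * X₀ - X₀ * H))
    (x y A R : ℝ)
    (hx : x = R * Real.cos A) (hy : y = R * Real.sin A)
    (a₁ a₂ b₁ b₂ : ℝ)
    (ha₁ : a₁ = A + Real.pi / 2) (ha₂ : a₂ = A - Real.pi / 2)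
    (hb₁ : b₁ = -R / 2) (hb₂ : b₂ = R / 2)
    (U : Matrix (Fin N) (Fin N) ℂ)
    (γ : ℝ → Matrix (Fin N) (Fin N) ℂ)
    (hγ : γ = fun t =>
      expGate H a₁ * expGate (rankOneProj ψ₀) (t * b₁) * expGate H (-Real.pi) *
        expGate (rankOneProj ψ₀) (t * b₂) * expGate H (-a₂) * U) :
    γ 0 = U ∧
    HasDerivWithinAt γ (((x : ℂ) • X₀ + (y : ℂ) • Y₀) * U) (Set.Ici (0 : ℝ)) 0 := by
  subst hγ hX₀ hY₀ hx hy ha₁ ha₂ hb₁ hb₂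
  have hH : IsIdempotentElem H := hProj
  constructor
  · simp only [zero_mul, expGate_zero, mul_one, expGate_mul_expGate]
    rw [show A + Real.pi / 2 + -Real.pi + -(A - Real.pi / 2) = 0 by ring, expGate_zero, one_mul]
  · have hd := (((((hasDerivAt_expGate_mul_const (rankOneProj ψ₀) (-R / 2) 0).const_mul
      (expGate H (A + Real.pi / 2))).mul_const (expGate H (-Real.pi))).mul
      (hasDerivAt_expGate_mul_const (rankOneProj ψ₀) (R / 2) 0)).mul_const
      (expGate H (-(A - Real.pi / 2)))).mul_const U
    simp only [zero_mul, expGate_zero, one_mul, mul_one] at hd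
    rw [grover_retraction_velocity hH] at hd
    exact hd.hasDerivWithinAt

theorem stmt_8 {N : ℕ} (H : Matrix (Fin N) (Fin N) ℂ)
    (hHerm : H.IsHermitian) (hProj : H * H = H)
    (ψ₀ : Fin N → ℂ) (hψ₀ : star ψ₀ ⬝ᵥ ψ₀ = 1)
    (X₀ Y₀ : Matrix (Fin N) (Fin N) ℂ)
    (hX₀ : X₀ = H * rankOneProj ψ₀ - rankOneProj ψ₀ * H)
    (hY₀ : Y₀ = Complex.I • (H * X₀ - X₀ * H))
    (x y A R : ℝ) (hR : 0 ≤ R)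
    (hx : x = R * Real.cos A) (hy : y = R * Real.sin A)
    (a₁ a₂ b₁ b₂ : ℝ)
    (ha₁ : a₁ = A + Real.pi / 2) (ha₂ : a₂ = A - Real.pi / 2)
    (hb₁ : b₁ = -R / 2) (hb₂ : b₂ = R / 2)
    (U : Matrix (Fin N) (Fin N) ℂ) (hU : U ∈ Matrix.unitaryGroup (Fin N) ℂ)
    (γ : ℝ → Matrix (Fin N) (Fin N) ℂ)
    (hγ : γ = fun t =>
      expGate H a₁ * expGate (rankOneProj ψ₀) (t * b₁) * expGate H (-Real.pi) *
        expGate (rankOneProj ψ₀) (t * b₂) * expGate H (-a₂) * U) :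
    γ 0 = U ∧
    HasDerivWithinAt γ (((x : ℂ) • X₀ + (y : ℂ) • Y₀) * U) (Set.Ici (0 : ℝ)) 0 :=
  stmt_8_general H hProj ψ₀ X₀ Y₀ hX₀ hY₀ x y A R hx hy a₁ a₂ b₁ b₂ ha₁ ha₂ hb₁ hb₂ U γ hγ
end

section
/- Let H be an N×N complex Hermitian matrix with H² = H, let |ψ0⟩ ∈ ℂ^N be a unit vector, ψ0 = |ψ0⟩⟨ψ0|, and f(U) := Tr(H U ψ0 U†). Then for every unitary U, the Riemannian gradient grad f(U) = [H, U ψ0 U†] U satisfies ‖grad f(U)‖_F² = 2 f(U) (1 − f(U)). -/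
/-!
Write `ρ = U ψ₀ U† = |v⟩⟨v|` with `v = U ψ₀`, again a unit vector. Unitary invariance of the trace
gives `‖[H, ρ] U‖_F² = Tr([H, ρ]† [H, ρ])`, which for Hermitian idempotents `H`, `ρ` equals
`2 (Tr(Hρ) − Tr(HρHρ))`; since `ρ` has rank one, `Tr(HρHρ) = Tr(Hρ)²`, and `Tr(Hρ) = f(U)` is real.
-/

open Matrix

/-- The Frobenius norm `‖A‖_F = √(Tr(A†A))`. -/
noncomputable def frobNorm {N : ℕ} (A : Matrix (Fin N) (Fin N) ℂ) : ℝ :=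
  Real.sqrt (Matrix.trace (Aᴴ * A)).re

/-- The cost value `f(U) = Tr(H U ψ0 U†)` (its real part; it is in fact real). -/
noncomputable def costVal {N : ℕ} (H P U : Matrix (Fin N) (Fin N) ℂ) : ℝ :=
  (Matrix.trace (H * (U * P * Uᴴ))).re

/-- The Riemannian gradient `grad f(U) = [H, U ψ0 U†] U`. -/
noncomputable def rieGrad {N : ℕ} (H P U : Matrix (Fin N) (Fin N) ℂ) :
    Matrix (Fin N) (Fin N) ℂ :=
  (H * (U * P * Uᴴ) - (U * P * Uᴴ) * H) * U

namespace Matrix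

variable {n R : Type*} [Fintype n]

theorem trace_mul_vecMulVec_mul_self [CommRing R] (A : Matrix n n R) (v w : n → R) :
    trace (A * vecMulVec v w * (A * vecMulVec v w)) = trace (A * vecMulVec v w) ^ 2 := by
  rw [mul_vecMulVec, vecMulVec_mul_vecMulVec, trace_vecMulVec, trace_vecMulVec, dotProduct_smul,
    smul_eq_mul, dotProduct_comm, sq]

theorem trace_conjTranspose_commutator_mul_self [CommRing R] [StarRing R] {P Q : Matrix n n R}
    (hP : P.IsHermitian) (hQ : Q.IsHermitian) (hPP : P * P = P) (hQQ : Q * Q = Q) :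
    trace ((P * Q - Q * P)ᴴ * (P * Q - Q * P))
      = 2 * (trace (P * Q) - trace (P * Q * (P * Q))) := by
  have hadj : (P * Q - Q * P)ᴴ = Q * P - P * Q := by
    rw [conjTranspose_sub, conjTranspose_mul, conjTranspose_mul, hP.eq, hQ.eq]
  have hQPPQ : trace (Q * P * (P * Q)) = trace (P * Q) := by
    rw [Matrix.mul_assoc, ← Matrix.mul_assoc P P Q, hPP, trace_mul_comm, Matrix.mul_assoc, hQQ]
  have hPQQP : trace (P * Q * (Q * P)) = trace (P * Q) := by
    rw [Matrix.mul_assoc, ← Matrix.mul_assoc Q Q P, hQQ, ← Matrix.mul_assoc, trace_mul_comm,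
      ← Matrix.mul_assoc, hPP]
  have hQPQP : trace (Q * P * (Q * P)) = trace (P * Q * (P * Q)) := by
    rw [← Matrix.mul_assoc, trace_mul_comm]
    simp only [Matrix.mul_assoc]
  rw [hadj, sub_mul, mul_sub, mul_sub, trace_sub, trace_sub, trace_sub, hQPPQ, hPQQP, hQPQP]
  ring

theorem trace_conjTranspose_mul_unitary [DecidableEq n] [CommRing R] [StarRing R]
    (A : Matrix n n R) {U : Matrix n n R} (hU : U ∈ unitaryGroup n R) :
    trace ((A * U)ᴴ * (A * U)) = trace (Aᴴ * A) := by
  rw [conjTranspose_mul, Matrix.mul_assoc, trace_mul_comm, Matrix.mul_assoc, Matrix.mul_assoc A,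
    ← star_eq_conjTranspose U, mem_unitaryGroup_iff.1 hU, Matrix.mul_one]

theorem IsHermitian.star_trace_mul [CommRing R] [StarRing R] {A B : Matrix n n R}
    (hA : A.IsHermitian) (hB : B.IsHermitian) : star (trace (A * B)) = trace (A * B) := by
  rw [← trace_conjTranspose, conjTranspose_mul, hA.eq, hB.eq, trace_mul_comm]

theorem star_mulVec_dotProduct_mulVec_of_unitary [DecidableEq n] [CommRing R] [StarRing R]
    {U : Matrix n n R} (hU : U ∈ unitaryGroup n R) (v : n → R) :
    star (U *ᵥ v) ⬝ᵥ (U *ᵥ v) = star v ⬝ᵥ v := by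
  rw [star_mulVec, dotProduct_mulVec, vecMul_vecMul, ← star_eq_conjTranspose U,
    mem_unitaryGroup_iff'.1 hU, vecMul_one]

end Matrix

open scoped ComplexOrder

theorem frobNorm_sq {N : ℕ} (A : Matrix (Fin N) (Fin N) ℂ) :
    frobNorm A ^ 2 = (trace (Aᴴ * A)).re :=
  Real.sq_sqrt (Complex.le_def.1 (posSemidef_conjTranspose_mul_self A).trace_nonneg).1

theorem rankOneProj_isHermitian {N : ℕ} (ψ : Fin N → ℂ) : (rankOneProj ψ).IsHermitian := by
  rw [IsHermitian, rankOneProj, conjTranspose_vecMulVec, star_star]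

theorem rankOneProj_mul_self {N : ℕ} {ψ : Fin N → ℂ} (hψ : star ψ ⬝ᵥ ψ = 1) :
    rankOneProj ψ * rankOneProj ψ = rankOneProj ψ := by
  rw [rankOneProj, vecMulVec_mul_vecMulVec, hψ, one_smul]

theorem mul_rankOneProj_mul_conjTranspose {N : ℕ} (U : Matrix (Fin N) (Fin N) ℂ) (ψ : Fin N → ℂ) :
    U * rankOneProj ψ * Uᴴ = rankOneProj (U *ᵥ ψ) := by
  rw [rankOneProj, rankOneProj, mul_vecMulVec, vecMulVec_mul, star_mulVec]

theorem stmt_15 {N : ℕ} (H : Matrix (Fin N) (Fin N) ℂ)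
    (hHerm : H.IsHermitian) (hProj : H * H = H)
    (ψ₀ : Fin N → ℂ) (hψ₀ : star ψ₀ ⬝ᵥ ψ₀ = 1) :
    ∀ U ∈ Matrix.unitaryGroup (Fin N) ℂ,
      frobNorm (rieGrad H (rankOneProj ψ₀) U) ^ 2
        = 2 * costVal H (rankOneProj ψ₀) U * (1 - costVal H (rankOneProj ψ₀) U) := by
  intro U hU
  set v := U *ᵥ ψ₀
  have hv : star v ⬝ᵥ v = 1 := (star_mulVec_dotProduct_mulVec_of_unitary hU ψ₀).trans hψ₀
  have hρ : U * rankOneProj ψ₀ * Uᴴ = rankOneProj v := mul_rankOneProj_mul_conjTranspose U ψ₀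
  have hreal : ((trace (H * rankOneProj v)).re : ℂ) = trace (H * rankOneProj v) :=
    Complex.conj_eq_iff_re.1 (hHerm.star_trace_mul (rankOneProj_isHermitian v))
  rw [frobNorm_sq, rieGrad, costVal, hρ, trace_conjTranspose_mul_unitary _ hU,
    trace_conjTranspose_commutator_mul_self hHerm (rankOneProj_isHermitian v) hProj
      (rankOneProj_mul_self hv), rankOneProj, trace_mul_vecMulVec_mul_self, ← rankOneProj, ← hreal]
  norm_cast
  ring
end
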